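/- arXiv:2602.20649 — 7 statements merged into one kernel-verified Lean document; each statement's English description precedes it below -/
import Mathlib

section
/- For every prime p and integers 2 ≤ k ≤ n, the p-adic valuation of k·C(n,k) is at least val_p(n) + 2 - k. -/
theorem padicValNat_mul_choose_ge (p n k : ℕ) (hp : p.Prime) (h1 : 2 ≤ k) (h2 : k ≤ n) :
    (padicValNat p (k * Nat.choose n k) : ℤ) ≥ (padicValNat p n : ℤ) + 2 - k := by
  haveI := Fact.mk hp
  obtain ⟨m, rfl⟩ : ∃ m, n = m + 1 := ⟨n - 1, by omega⟩
  obtain ⟨j, rfl⟩ : ∃ j, k = j + 1 := ⟨k - 1, by omega⟩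
  have key : (j + 1) * Nat.choose (m + 1) (j + 1) = (m + 1) * Nat.choose m j := by
    rw [mul_comm, Nat.add_one_mul_choose_eq, mul_comm]
  have hc : Nat.choose m j ≠ 0 := Nat.pos_iff_ne_zero.mp (Nat.choose_pos (by omega))
  have heq : padicValNat p ((j + 1) * Nat.choose (m + 1) (j + 1))
      = padicValNat p (m + 1) + padicValNat p (Nat.choose m j) := by
    rw [key, padicValNat.mul (by omega) hc]
  rw [heq]
  omega
end

section
/- Let p be prime, P ∈ ℤ_p[x₁,...,xₙ], and r₀ ∈ ℤ_p^n with thickness decomposition P(r₀ + p·x) = p^t Q(x). Then the multiplicity of the reduction of P mod p at r₀ (the smallest h such that the degree-h homogeneous Taylor component of P at r₀ is nonzero mod p) is at least t, and the degree of the reduction of Q mod p is at most t. -/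
/-!
Put `R(x) = P(r₀ + x)`. Then `pShift p 1 r₀ P = R(p·x)`, so comparing the coefficients of a
monomial `x^d` in `P(r₀ + p·x) = pᵗ Q(x)` gives `pᵗ Q_d = p^|d| R_d`. For `|d| < t` this forces
`p ∣ R_d`, so every Taylor component of degree `< t` vanishes mod `p`; for `|d| > t` it forces
`p ∣ Q_d`, which bounds the degree of `Q mod p`. Since the translation `x ↦ r₀ + x` is invertible,
`R` is primitive along with `P`, so some Taylor component survives mod `p` and the infimum is not
the junk value `sInf ∅ = 0`.
-/

open MvPolynomial

/-- `pShift p m r P` is the polynomial `P(r + pᵐ·x)`. -/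
noncomputable def pShift (p : ℕ) [Fact p.Prime] {n : ℕ} (m : ℕ) (r : Fin n → ℤ_[p])
    (P : MvPolynomial (Fin n) ℤ_[p]) : MvPolynomial (Fin n) ℤ_[p] :=
  bind₁ (fun i => C (r i) + C ((p : ℤ_[p]) ^ m) * X i) P

theorem dvd_of_pow_mul_eq_pow_mul {M : Type*} [CommMonoidWithZero M] [IsLeftCancelMulZero M]
    {a x y : M} {k l : ℕ} (ha : a ≠ 0) (hkl : k < l) (h : a ^ k * x = a ^ l * y) : a ∣ x := by
  obtain ⟨m, rfl⟩ := Nat.exists_eq_add_of_lt hkl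
  rw [pow_add, pow_add, mul_assoc, mul_assoc] at h
  rw [mul_left_cancel₀ (pow_ne_zero k ha) h, pow_one]
  exact dvd_mul_of_dvd_right (dvd_mul_right a y) _

namespace MvPolynomial

variable {σ R : Type*} [CommSemiring R]

theorem coeff_bind₁_C_mul_X (c : R) (φ : MvPolynomial σ R) (d : σ →₀ ℕ) :
    coeff d (bind₁ (fun i => C c * X i) φ) = c ^ d.degree * coeff d φ := by
  classical
  induction φ using MvPolynomial.induction_on' with
  | monomial e a =>
    have hmon : bind₁ (fun i => C c * X i) (monomial e a) = monomial e (c ^ e.degree * a) := by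
      rw [bind₁_monomial]
      simp only [mul_pow, ← C_pow, Finset.prod_mul_distrib, ← map_prod,
        Finset.prod_pow_eq_pow_sum]
      rw [monomial_eq, Finsupp.prod, map_mul, Finsupp.degree_apply]
      ring
    rw [hmon, coeff_monomial, coeff_monomial]
    split_ifs with h <;> simp [h]
  | add φ ψ hφ hψ => simp only [map_add, coeff_add, hφ, hψ, mul_add]

theorem C_dvd_of_C_dvd_bind₁ {τ : Type*} {c : R} {φ : MvPolynomial σ R}
    (f : σ → MvPolynomial τ R) (g : τ → MvPolynomial σ R) (hgf : ∀ i, bind₁ g (f i) = X i)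
    (h : C c ∣ bind₁ f φ) : C c ∣ φ := by
  have hφ : bind₁ g (bind₁ f φ) = φ := by simp [bind₁_bind₁, hgf]
  obtain ⟨ψ, hψ⟩ := h
  rw [← hφ, hψ, map_mul, algHom_C]
  exact dvd_mul_right _ _

end MvPolynomial

namespace PadicInt

variable {p : ℕ} [Fact p.Prime]

theorem toZMod_eq_zero_iff_dvd (x : ℤ_[p]) : toZMod x = 0 ↔ (p : ℤ_[p]) ∣ x := by
  rw [← RingHom.mem_ker, ker_toZMod, maximalIdeal_eq_span_p, Ideal.mem_span_singleton]

theorem map_toZMod_eq_zero_iff {σ : Type*} (φ : MvPolynomial σ ℤ_[p]) :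
    MvPolynomial.map toZMod φ = 0 ↔ C (p : ℤ_[p]) ∣ φ := by
  simp only [MvPolynomial.ext_iff, coeff_map, coeff_zero, toZMod_eq_zero_iff_dvd,
    C_dvd_iff_dvd_coeff]

end PadicInt

theorem pShift_eq_bind₁_C_pow_mul_X {p : ℕ} [Fact p.Prime] {n : ℕ} (m : ℕ)
    (r : Fin n → ℤ_[p]) (P : MvPolynomial (Fin n) ℤ_[p]) :
    pShift p m r P =
      bind₁ (fun i => C ((p : ℤ_[p]) ^ m) * X i) (bind₁ (fun i => C (r i) + X i) P) := by
  rw [bind₁_bind₁, pShift]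
  simp

theorem mult_ge_thickness_and_deg_le_general (p : ℕ) [Fact p.Prime] {n : ℕ}
    (P Q : MvPolynomial (Fin n) ℤ_[p]) (r₀ : Fin n → ℤ_[p]) (t : ℕ)
    (hprim : ¬ C (p : ℤ_[p]) ∣ P)
    (hQ : pShift p 1 r₀ P = C ((p : ℤ_[p]) ^ t) * Q) :
    t ≤ sInf {h : ℕ | MvPolynomial.map (PadicInt.toZMod)
        (homogeneousComponent h (bind₁ (fun i => C (r₀ i) + X i) P)) ≠ 0} ∧
    (MvPolynomial.map (PadicInt.toZMod) Q).totalDegree ≤ t := by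
  have hp : (p : ℤ_[p]) ≠ 0 := Nat.cast_ne_zero.mpr (Fact.out : p.Prime).ne_zero
  set R := bind₁ (fun i => C (r₀ i) + X i) P
  have hcoeff (d : Fin n →₀ ℕ) : (p : ℤ_[p]) ^ t * coeff d Q = p ^ d.degree * coeff d R := by
    simpa only [pShift_eq_bind₁_C_pow_mul_X, pow_one, coeff_bind₁_C_mul_X, coeff_C_mul]
      using (congrArg (coeff d) hQ).symm
  refine ⟨le_csInf ?_ fun h hh => ?_, Finset.sup_le fun d hd => ?_⟩
  · by_contra hempty
    have hinv (i : Fin n) : bind₁ (fun i => X i - C (r₀ i)) (C (r₀ i) + X i) = X i := by simp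
    refine hprim (C_dvd_of_C_dvd_bind₁ _ _ hinv (?_ : C _ ∣ R))
    rw [← sum_homogeneousComponent R]
    refine Finset.dvd_sum fun h _ => ?_
    rw [← PadicInt.map_toZMod_eq_zero_iff]
    exact not_not.mp fun hne => hempty ⟨h, hne⟩
  · by_contra! hlt
    refine hh ((PadicInt.map_toZMod_eq_zero_iff _).mpr ((C_dvd_iff_dvd_coeff _ _).mpr fun d => ?_))
    rw [coeff_homogeneousComponent]
    split_ifs with hd
    · exact dvd_of_pow_mul_eq_pow_mul hp (hd ▸ hlt) (hcoeff d).symm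
    · exact dvd_zero _
  · by_contra! hgt
    rw [mem_support_iff, coeff_map, Ne, PadicInt.toZMod_eq_zero_iff_dvd] at hd
    exact hd (dvd_of_pow_mul_eq_pow_mul hp hgt (hcoeff d))

/-- If `P(r₀ + p·x) = pᵗ Q(x)` with `t` maximal (the thickness), then the multiplicity
of the reduction of `P` mod `p` at `r₀` (the smallest `h` such that the degree-`h`
homogeneous Taylor component of `P` at `r₀` is nonzero mod `p`) is at least `t`, and the
total degree of the reduction of `Q` mod `p` is at most `t`. -/
theorem mult_ge_thickness_and_deg_le (p : ℕ) [Fact p.Prime] {n : ℕ}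
    (P Q : MvPolynomial (Fin n) ℤ_[p]) (r₀ : Fin n → ℤ_[p]) (t : ℕ)
    (hprim : ¬ C (p : ℤ_[p]) ∣ P)
    (hQ : pShift p 1 r₀ P = C ((p : ℤ_[p]) ^ t) * Q)
    (hQmax : ¬ C (p : ℤ_[p]) ∣ Q) :
    t ≤ sInf {h : ℕ | MvPolynomial.map (PadicInt.toZMod)
        (homogeneousComponent h (bind₁ (fun i => C (r₀ i) + X i) P)) ≠ 0} ∧
    (MvPolynomial.map (PadicInt.toZMod) Q).totalDegree ≤ t :=
  mult_ge_thickness_and_deg_le_general p P Q r₀ t hprim hQ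
end

section
/- Let p be prime, P ∈ ℤ_p[x₁,...,xₙ], with successive thickness decompositions P(r₀ + p·x) = p^t Q(x) and Q(r₁ + p·x) = p^{t'} R(x). Then t' ≤ t; that is, thickness is nonincreasing along the trunk. -/
/-!
Write `S(x) = Q(r₁ + x)`, so that `S(p·x) = p^{t'} R(x)`; substituting `x ↦ r₁ + x` in
`P(r₀ + p·x) = pᵗ Q(x)` gives `U(p·x) = pᵗ S(x)` with `U(x) = P(r₀ + p·r₁ + x)`. On a monomial of
degree `d` these read `pᵈ Sₑ = p^{t'} Rₑ` and `pᵈ Uₑ = pᵗ Sₑ`. If `t < t'`, the first forces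
`p ∣ Sₑ` when `d ≤ t` and the second when `d > t`; so `p ∣ S`, hence `p ∣ Q`, contradicting the
maximality of `t`.
-/

open MvPolynomial

theorem dvd_of_pow_mul_eq_pow_mul_of_lt {M : Type*} [CommMonoidWithZero M]
    [IsLeftCancelMulZero M] {π x y : M} {a b : ℕ} (hπ : π ≠ 0) (h : π ^ a * x = π ^ b * y)
    (hab : a < b) : π ∣ x := by
  rw [← Nat.add_sub_cancel' hab.le, pow_add, mul_assoc] at h
  rw [mul_left_cancel₀ (pow_ne_zero a hπ) h]
  exact (dvd_pow_self π (Nat.sub_ne_zero_of_lt hab)).mul_right y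

namespace MvPolynomial

variable {R σ : Type*} [CommSemiring R]

noncomputable def scaleVars (c : R) : MvPolynomial σ R →ₐ[R] MvPolynomial σ R :=
  bind₁ fun i => C c * X i

noncomputable def translateVars (r : σ → R) : MvPolynomial σ R →ₐ[R] MvPolynomial σ R :=
  bind₁ fun i => C (r i) + X i

theorem scaleVars_monomial (c : R) (u : σ →₀ ℕ) (a : R) :
    scaleVars c (monomial u a) = monomial u (c ^ u.degree * a) := by
  rw [scaleVars, bind₁_monomial, Finset.prod_congr rfl fun i _ => mul_pow (C c) (X i) (u i),
    Finset.prod_mul_distrib, Finset.prod_pow_eq_pow_sum, ← Finsupp.degree_apply, ← C_pow,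
    prod_X_pow_eq_monomial, ← mul_assoc, ← C_mul, C_mul_monomial, mul_one, mul_comm]

theorem coeff_scaleVars [DecidableEq σ] (c : R) (φ : MvPolynomial σ R) (e : σ →₀ ℕ) :
    coeff e (scaleVars c φ) = c ^ e.degree * coeff e φ := by
  induction φ using MvPolynomial.induction_on' with
  | add f g hf hg => rw [map_add, coeff_add, coeff_add, hf, hg, mul_add]
  | monomial u a =>
    rw [scaleVars_monomial, coeff_monomial, coeff_monomial]
    split_ifs with h
    · rw [h]
    · rw [mul_zero]

theorem translateVars_translateVars (r s : σ → R) (φ : MvPolynomial σ R) :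
    translateVars r (translateVars s φ) = translateVars (s + r) φ := by
  simp only [translateVars, bind₁_bind₁, map_add, bind₁_C_right, bind₁_X_right, Pi.add_apply,
    add_assoc]

theorem translateVars_scaleVars (r : σ → R) (c : R) (φ : MvPolynomial σ R) :
    translateVars r (scaleVars c φ) = scaleVars c (translateVars (c • r) φ) := by
  simp only [translateVars, scaleVars, bind₁_bind₁, map_add, map_mul, bind₁_C_right,
    bind₁_X_right, Pi.smul_apply, smul_eq_mul, mul_add]

theorem translateVars_neg_translateVars {R : Type*} [CommRing R] (r : σ → R)
    (φ : MvPolynomial σ R) :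
    translateVars (-r) (translateVars r φ) = φ := by
  rw [translateVars_translateVars, add_neg_cancel]
  simp [translateVars]

theorem C_dvd_translateVars_iff {R : Type*} [CommRing R] (a : R) (r : σ → R)
    (φ : MvPolynomial σ R) :
    C a ∣ translateVars r φ ↔ C a ∣ φ := by
  refine ⟨fun h => ?_, fun h => ?_⟩
  · simpa only [translateVars_neg_translateVars, algHom_C, algebraMap_eq]
      using map_dvd (translateVars (-r)) h
  · simpa only [algHom_C, algebraMap_eq] using map_dvd (translateVars r) h

theorem C_dvd_of_scaleVars_eq [IsLeftCancelMulZero R] {π : R} (hπ : π ≠ 0)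
    {U S T : MvPolynomial σ R} {t t' : ℕ} (hU : scaleVars π U = C (π ^ t) * S)
    (hS : scaleVars π S = C (π ^ t') * T) (htt' : t < t') : C π ∣ S := by
  classical
  refine (C_dvd_iff_dvd_coeff π S).2 fun e => ?_
  have hUe := congrArg (coeff e) hU
  have hSe := congrArg (coeff e) hS
  rw [coeff_scaleVars, coeff_C_mul] at hUe hSe
  rcases le_or_gt e.degree t with hle | hlt
  · exact dvd_of_pow_mul_eq_pow_mul_of_lt hπ hSe (hle.trans_lt htt')
  · exact dvd_of_pow_mul_eq_pow_mul_of_lt hπ hUe.symm hlt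

end MvPolynomial

theorem pShift_eq_scaleVars_translateVars (p : ℕ) [Fact p.Prime] {n : ℕ} (m : ℕ)
    (r : Fin n → ℤ_[p]) (P : MvPolynomial (Fin n) ℤ_[p]) :
    pShift p m r P = scaleVars ((p : ℤ_[p]) ^ m) (translateVars r P) := by
  simp only [pShift, scaleVars, translateVars, bind₁_bind₁, map_add, bind₁_C_right, bind₁_X_right]

theorem thickness_nonincreasing_general (p : ℕ) [Fact p.Prime] {n : ℕ}
    (P Q R : MvPolynomial (Fin n) ℤ_[p]) (r₀ r₁ : Fin n → ℤ_[p]) (t t' : ℕ)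
    (hQ : pShift p 1 r₀ P = C ((p : ℤ_[p]) ^ t) * Q)
    (hQmax : ¬ C (p : ℤ_[p]) ∣ Q)
    (hR : pShift p 1 r₁ Q = C ((p : ℤ_[p]) ^ t') * R) :
    t' ≤ t := by
  by_contra! hlt
  have hp : (p : ℤ_[p]) ≠ 0 := Nat.cast_ne_zero.2 (Fact.out : p.Prime).ne_zero
  have hS : scaleVars (p : ℤ_[p]) (translateVars r₁ Q) = C ((p : ℤ_[p]) ^ t') * R := by
    rw [← hR, pShift_eq_scaleVars_translateVars, pow_one]
  have hU := congrArg (translateVars r₁) hQ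
  rw [pShift_eq_scaleVars_translateVars, pow_one, translateVars_scaleVars,
    translateVars_translateVars, map_mul, algHom_C, algebraMap_eq] at hU
  exact hQmax ((C_dvd_translateVars_iff _ r₁ Q).1 (C_dvd_of_scaleVars_eq hp hU hS hlt))

/-- Thickness is nonincreasing along the trunk: if `P(r₀ + p·x) = pᵗ Q(x)` and
`Q(r₁ + p·x) = p^{t'} R(x)` (with `t`, `t'` maximal), then `t' ≤ t`. -/
theorem thickness_nonincreasing (p : ℕ) [Fact p.Prime] {n : ℕ}
    (P Q R : MvPolynomial (Fin n) ℤ_[p]) (r₀ r₁ : Fin n → ℤ_[p]) (t t' : ℕ)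
    (hQ : pShift p 1 r₀ P = C ((p : ℤ_[p]) ^ t) * Q)
    (hQmax : ¬ C (p : ℤ_[p]) ∣ Q)
    (hR : pShift p 1 r₁ Q = C ((p : ℤ_[p]) ^ t') * R)
    (hRmax : ¬ C (p : ℤ_[p]) ∣ R) :
    t' ≤ t :=
  thickness_nonincreasing_general p P Q R r₀ r₁ t t' hQ hQmax hR
end

section
/- Let p be prime and P ∈ ℤ_p[x₁,...,xₙ]. Suppose r₀ ∈ ℤ_p^n satisfies P(r₀) ≡ 0 (mod p), P(r₀) ≢ 0 (mod p²), and all partial derivatives ∂P/∂x_i(r₀) ≡ 0 (mod p). Then the successor Q of P at r₀ (defined by P(r₀ + p·x) = p·Q(x)) has no root modulo p. -/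
open MvPolynomial

/-- Taylor expansion modulo `p²`. -/
lemma taylor_mod_sq (p : ℕ) [Fact p.Prime] {n : ℕ} (r y : Fin n → ℤ_[p])
    (P : MvPolynomial (Fin n) ℤ_[p]) :
    ∃ e : ℤ_[p], eval (fun i => r i + (p : ℤ_[p]) * y i) P =
      eval r P + (p : ℤ_[p]) * (∑ i, y i * eval r (pderiv i P)) + (p : ℤ_[p])^2 * e := by
  induction P using MvPolynomial.induction_on with
  | C a => exact ⟨0, by simp⟩
  | add P Q hP hQ =>
    obtain ⟨e, he⟩ := hP; obtain ⟨f, hf⟩ := hQ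
    refine ⟨e + f, ?_⟩
    simp only [map_add, he, hf, mul_add, Finset.sum_add_distrib]
    ring
  | mul_X P j hP =>
    obtain ⟨e, he⟩ := hP
    refine ⟨e * r j + (∑ i, y i * eval r (pderiv i P)) * y j + (p : ℤ_[p]) * e * y j, ?_⟩
    have hsum : ∑ i, y i * eval r (pderiv i (P * X j)) =
        (∑ i, y i * eval r (pderiv i P)) * r j + eval r P * y j := by
      have : ∀ i, pderiv i (P * X j) = pderiv i P * X j + P * (if j = i then 1 else 0) := by
        intro i; rw [pderiv_mul, pderiv_X]
        simp [Pi.single_apply]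
      simp only [this, map_add, map_mul, eval_X, apply_ite (eval r), map_one, map_zero,
        mul_add, mul_ite, mul_one, mul_zero]
      rw [Finset.sum_add_distrib, Finset.sum_ite_eq, Finset.sum_mul]
      simp [mul_comm, mul_assoc, mul_left_comm]
    rw [hsum, map_mul, eval_X, map_mul, eval_X, he]
    ring

lemma dvd_of_toZMod_eq_zero {p : ℕ} [Fact p.Prime] {z : ℤ_[p]}
    (h : PadicInt.toZMod z = 0) : (p : ℤ_[p]) ∣ z := by
  have : z ∈ RingHom.ker (PadicInt.toZMod (p := p)) := h
  rw [PadicInt.ker_toZMod, PadicInt.maximalIdeal_eq_span_p, Ideal.mem_span_singleton] at this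
  exact this

/-- If `P(r₀) ≡ 0 (mod p)`, `P(r₀) ≢ 0 (mod p²)` and all partial derivatives of `P`
vanish at `r₀` mod `p`, then the successor `Q` of `P` at `r₀` has no root modulo `p`. -/
theorem successor_no_root (p : ℕ) [Fact p.Prime] {n : ℕ}
    (P Q : MvPolynomial (Fin n) ℤ_[p]) (r₀ : Fin n → ℤ_[p])
    (h1 : (p : ℤ_[p]) ∣ eval r₀ P)
    (h2 : ¬ (p : ℤ_[p]) ^ 2 ∣ eval r₀ P)
    (h3 : ∀ i, (p : ℤ_[p]) ∣ eval r₀ (pderiv i P))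
    (hQ : pShift p 1 r₀ P = C (p : ℤ_[p]) * Q) :
    ∀ x : Fin n → ZMod p, eval x (MvPolynomial.map (PadicInt.toZMod) Q) ≠ 0 := by
  intro x hx
  set y : Fin n → ℤ_[p] := fun i => ((x i).val : ℤ_[p]) with hy
  -- evaluate the defining identity of Q at y
  have heval : eval (fun i => r₀ i + (p : ℤ_[p]) * y i) P = (p : ℤ_[p]) * eval y Q := by
    have := congrArg (eval y) hQ
    rw [pShift, eval_mul, eval_C] at this
    rw [← this]
    rw [show (eval y : MvPolynomial (Fin n) ℤ_[p] →+* ℤ_[p]) = eval₂Hom (RingHom.id _) y from rfl]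
    rw [eval₂Hom_bind₁]
    simp [pow_one]
  -- Taylor expansion
  obtain ⟨e, he⟩ := taylor_mod_sq p r₀ y P
  obtain ⟨c, hc⟩ := h1
  have hsum : (p : ℤ_[p]) ∣ ∑ i, y i * eval r₀ (pderiv i P) :=
    Finset.dvd_sum fun i _ => (h3 i).mul_left (y i)
  obtain ⟨d, hd⟩ := hsum
  -- cancel p
  have hp0 : (p : ℤ_[p]) ≠ 0 := Nat.cast_ne_zero.mpr (Fact.out : p.Prime).ne_zero
  have hQy : eval y Q = c + (p : ℤ_[p]) * (d + e) := by
    apply mul_left_cancel₀ hp0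
    rw [← heval, he, hc, hd]; ring
  -- hx gives p ∣ eval y Q
  have hmap : eval x (MvPolynomial.map (PadicInt.toZMod) Q) = PadicInt.toZMod (eval y Q) := by
    rw [eval_map]
    rw [show PadicInt.toZMod (eval y Q)
        = eval₂ ((PadicInt.toZMod).comp (RingHom.id _))
            (fun i => PadicInt.toZMod ((x i).val : ℤ_[p])) Q from
      eval₂_comp_left PadicInt.toZMod (RingHom.id _) _ Q]
    simp [ZMod.natCast_val, ZMod.cast_id]
  rw [hmap] at hx
  have hdvd : (p : ℤ_[p]) ∣ eval y Q := dvd_of_toZMod_eq_zero hx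
  have hdc : (p : ℤ_[p]) ∣ c := by
    have : (p : ℤ_[p]) ∣ (p : ℤ_[p]) * (d + e) := ⟨d + e, rfl⟩
    have := (dvd_sub hdvd this)
    rwa [hQy, add_sub_cancel_right] at this
  obtain ⟨c', hc'⟩ := hdc
  exact h2 ⟨c', by rw [hc, hc']; ring⟩
end

section
/- Let p be prime and P ∈ ℤ_p[x₁,...,xₙ]. Suppose P(r₀) ≡ 0 (mod p) and ∂P/∂x_i(r₀) ≢ 0 (mod p) for some i. Then the thickness of P at r₀ equals 1, and the reduction mod p of the successor Q of P at r₀ is an affine polynomial c₀/p + c₁x₁ + ... + cₙxₙ with c_i ≢ 0 mod p; consequently Q has exactly p^{n-1} roots modulo p, and at each such root Q again satisfies the Hensel condition (some partial derivative nonzero mod p). -/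
open MvPolynomial

lemma toZMod_zero_iff (p : ℕ) [Fact p.Prime] (x : ℤ_[p]) :
    PadicInt.toZMod x = 0 ↔ (p : ℤ_[p]) ∣ x := by
  rw [← RingHom.mem_ker, PadicInt.ker_toZMod, PadicInt.maximalIdeal_eq_span_p,
    Ideal.mem_span_singleton]

lemma pShift_taylor (p : ℕ) [Fact p.Prime] {n : ℕ} (r₀ : Fin n → ℤ_[p])
    (P : MvPolynomial (Fin n) ℤ_[p]) :
    ∃ R, pShift p 1 r₀ P = C (eval r₀ P)
      + C (p : ℤ_[p]) * (∑ j, C (eval r₀ (pderiv j P)) * X j)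
      + C ((p : ℤ_[p]) ^ 2) * R := by
  induction P using MvPolynomial.induction_on with
  | C a => exact ⟨0, by simp [pShift]⟩
  | add f g hf hg =>
    obtain ⟨R1, h1⟩ := hf
    obtain ⟨R2, h2⟩ := hg
    refine ⟨R1 + R2, ?_⟩
    have hs : pShift p 1 r₀ (f + g) = pShift p 1 r₀ f + pShift p 1 r₀ g := by
      simp [pShift]
    rw [hs, h1, h2]
    simp only [map_add, add_mul, Finset.sum_add_distrib, mul_add]
    ring
  | mul_X f i hf =>
    obtain ⟨R, h⟩ := hf
    refine ⟨(∑ j, C (eval r₀ (pderiv j f)) * X j) * X i + C (r₀ i) * R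
      + C ((p : ℤ_[p])) * (R * X i), ?_⟩
    have hs : pShift p 1 r₀ (f * X i)
        = pShift p 1 r₀ f * (C (r₀ i) + C ((p : ℤ_[p])) * X i) := by
      simp [pShift]
    have hL : (∑ j, C (eval r₀ (pderiv j (f * X i))) * X j)
        = C (r₀ i) * (∑ j, C (eval r₀ (pderiv j f)) * X j) + C (eval r₀ f) * X i := by
      rw [Finset.mul_sum]
      rw [show C (eval r₀ f) * X i = ∑ j, if j = i then C (eval r₀ f) * X j else 0 by
        simp [Finset.sum_ite_eq' Finset.univ i]]
      rw [← Finset.sum_add_distrib]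
      refine Finset.sum_congr rfl fun j _ => ?_
      rcases eq_or_ne j i with rfl | hj
      · simp [pderiv_X_self, mul_comm]
        ring
      · simp [Pi.single_eq_of_ne (Ne.symm hj), hj]
        ring
    rw [hs, h, hL]
    simp only [map_mul, eval_X, map_pow]
    ring

lemma card_affine_roots (p : ℕ) [Fact p.Prime] {n : ℕ} (c : Fin n → ZMod p) (a : ZMod p)
    (i : Fin n) (hci : c i ≠ 0) :
    Nat.card {x : Fin n → ZMod p // a + ∑ j, c j * x j = 0} = p ^ (n - 1) := by
  classical
  set s : Finset (Fin n) := {i}ᶜ with hs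
  set S : (Fin n → ZMod p) → ZMod p := fun x => a + ∑ j ∈ s, c j * x j with hS
  have hsum : ∀ x : Fin n → ZMod p, a + ∑ j, c j * x j = c i * x i + S x := by
    intro x
    rw [hS]
    rw [Fintype.sum_eq_add_sum_compl i (fun j => c j * x j)]
    ring
  have hagree : ∀ x x' : Fin n → ZMod p, (∀ j, j ≠ i → x j = x' j) → S x = S x' := by
    intro x x' h
    simp only [hS]
    congr 1
    refine Finset.sum_congr rfl fun j hj => ?_
    rw [h j (by simpa [hs] using hj)]
  have key : ∀ x : Fin n → ZMod p, (a + ∑ j, c j * x j = 0) ↔ x i = -(c i)⁻¹ * S x := by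
    intro x
    rw [hsum]
    constructor
    · intro h
      have : c i * x i = -S x := by linear_combination h
      field_simp at this ⊢
      linear_combination this
    · intro h
      rw [h]
      field_simp
      ring
  set ext : ((j : {j // j ∈ s}) → ZMod p) → (Fin n → ZMod p) :=
    fun y j => if h : j ∈ s then y ⟨j, h⟩ else 0 with hext
  have E : {x : Fin n → ZMod p // a + ∑ j, c j * x j = 0} ≃ ({j // j ∈ s} → ZMod p) :=
    { toFun := fun x j => x.1 j.1
      invFun := fun y => ⟨Function.update (ext y) i (-(c i)⁻¹ * S (ext y)), by
        have h1 : S (Function.update (ext y) i (-(c i)⁻¹ * S (ext y))) = S (ext y) :=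
          hagree _ _ (fun j hj => Function.update_of_ne hj _ _)
        rw [key]
        rw [h1, Function.update_self]⟩
      left_inv := by
        rintro ⟨x, hx⟩
        ext j
        simp only
        rcases eq_or_ne j i with rfl | hj
        · rw [Function.update_self]
          have h1 : S (ext fun k => x k.1) = S x := by
            refine hagree _ _ fun k hk => ?_
            simp [hext, hs, hk]
          rw [h1]
          exact ((key x).mp hx).symm
        · rw [Function.update_of_ne hj]
          simp [hext, hs, hj]
      right_inv := by
        intro y
        funext k
        have hk : (k : Fin n) ≠ i := by
          have h2 := k.2
          exact Finset.notMem_singleton.mp (Finset.mem_compl.mp h2)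
        simp only
        rw [Function.update_of_ne hk]
        simp [hext] }
  rw [Nat.card_congr E, Nat.card_eq_fintype_card, Fintype.card_fun]
  have : Fintype.card {j // j ∈ s} = n - 1 := by
    simp [hs, Fintype.card_coe]
  rw [this, ZMod.card]

/-- Hensel's lemma situation: if `P(r₀) ≡ 0 (mod p)` and some partial derivative of `P`
is nonzero at `r₀` mod `p`, then the thickness at `r₀` equals `1`, the reduction of the
successor `Q` mod `p` is affine with a nonzero linear coefficient, `Q` has exactly
`p^(n-1)` roots mod `p`, and at each root of `Q` mod `p` the Hensel condition holds again. -/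
theorem hensel_situation (p : ℕ) [Fact p.Prime] {n : ℕ} (hn : 0 < n)
    (P Q : MvPolynomial (Fin n) ℤ_[p]) (r₀ : Fin n → ℤ_[p])
    (h1 : (p : ℤ_[p]) ∣ eval r₀ P)
    (h2 : ∃ i, ¬ (p : ℤ_[p]) ∣ eval r₀ (pderiv i P))
    (hQ : pShift p 1 r₀ P = C (p : ℤ_[p]) * Q) :
    (¬ C ((p : ℤ_[p]) ^ 2) ∣ pShift p 1 r₀ P) ∧
    (MvPolynomial.map (PadicInt.toZMod) Q).totalDegree ≤ 1 ∧
    (∃ i, coeff (Finsupp.single i 1) (MvPolynomial.map (PadicInt.toZMod) Q) ≠ 0) ∧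
    Nat.card {x : Fin n → ZMod p // eval x (MvPolynomial.map (PadicInt.toZMod) Q) = 0}
      = p ^ (n - 1) ∧
    (∀ r₁ : Fin n → ℤ_[p], (p : ℤ_[p]) ∣ eval r₁ Q →
      ∃ j, ¬ (p : ℤ_[p]) ∣ eval r₁ (pderiv j Q)) := by
  obtain ⟨i, hi⟩ := h2
  obtain ⟨a, ha⟩ := h1
  obtain ⟨R, hR⟩ := pShift_taylor p r₀ P
  have hp0 : (p : ℤ_[p]) ≠ 0 := Nat.cast_ne_zero.mpr (Fact.out : p.Prime).ne_zero
  have hCp : (C (p : ℤ_[p]) : MvPolynomial (Fin n) ℤ_[p]) ≠ 0 := by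
    simpa using hp0
  have hQeq : Q = C a + (∑ j, C (eval r₀ (pderiv j P)) * X j) + C (p : ℤ_[p]) * R := by
    apply mul_left_cancel₀ hCp
    rw [← hQ, hR, ha]
    simp only [sq, map_mul]
    ring
  set c : Fin n → ZMod p := fun j => PadicInt.toZMod (eval r₀ (pderiv j P)) with hc
  have hci : c i ≠ 0 := fun h => hi ((toZMod_zero_iff p _).mp h)
  have hmapQ : MvPolynomial.map (PadicInt.toZMod) Q
      = C (PadicInt.toZMod a) + ∑ j, C (c j) * X j := by
    rw [hQeq]
    simp [hc, map_sum, map_natCast, ZMod.natCast_self]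
  have hcoeff : ∀ k, coeff (Finsupp.single k 1) (MvPolynomial.map (PadicInt.toZMod) Q)
      = c k := by
    intro k
    rw [hmapQ, coeff_add, coeff_C, coeff_sum]
    simp [coeff_C_mul, coeff_X', Finsupp.single_left_inj]
    intro h
    exact absurd h.symm (by simp [Finsupp.single_eq_zero])
  refine ⟨?_, ?_, ⟨i, ?_⟩, ?_, ?_⟩
  · rintro ⟨T, hT⟩
    have hQT : Q = C (p : ℤ_[p]) * T := by
      apply mul_left_cancel₀ hCp
      rw [← hQ, hT]
      simp only [sq, map_mul]
      ring
    have : MvPolynomial.map (PadicInt.toZMod) Q = 0 := by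
      rw [hQT]
      simp [map_natCast, ZMod.natCast_self]
    rw [this] at hcoeff
    exact hci ((hcoeff i).symm.trans (by simp))
  · rw [hmapQ]
    refine le_trans (totalDegree_add _ _) (max_le (by simp) ?_)
    refine le_trans (totalDegree_finset_sum _ _) (Finset.sup_le fun j _ => ?_)
    refine le_trans (totalDegree_mul _ _) ?_
    simp [totalDegree_X]
  · rw [hcoeff i]
    exact hci
  · have heval : ∀ x : Fin n → ZMod p,
        eval x (MvPolynomial.map (PadicInt.toZMod) Q)
          = PadicInt.toZMod a + ∑ j, c j * x j := by
      intro x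
      rw [hmapQ]
      simp
    rw [Nat.card_congr (Equiv.subtypeEquivRight fun x => by rw [heval x])]
    exact card_affine_roots p c (PadicInt.toZMod a) i hci
  · intro r₁ _
    refine ⟨i, fun hdvd => hi ?_⟩
    have hpd : eval r₁ (pderiv i Q)
        = eval r₀ (pderiv i P) + p * eval r₁ (pderiv i R) := by
      rw [hQeq]
      simp [map_sum, pderiv_X, Pi.single_apply, Finset.sum_ite_eq', mul_comm]
    rw [hpd] at hdvd
    have h3 : (p : ℤ_[p]) ∣ (p : ℤ_[p]) * eval r₁ (pderiv i R) := Dvd.intro _ rfl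
    have := dvd_sub hdvd h3
    simpa using this
end

section
/- Let p be prime, P ∈ ℤ_p[x₁,...,xₙ] p-primitive, and e ≥ 1. Then x₀ ∈ ℤ_p^n satisfies P(x₀) ≡ 0 (mod p^e) if and only if there exists a vertex (r,k) of the trunk of P with x₀ ≡ r (mod p^k) and φ(r,k) ≥ e. Moreover, such a vertex is unique under the additional condition φ(r,k) - t_k < e ≤ φ(r,k), where t_k is the thickness at (r,k). -/
/-!
Along the trunk, `P(r + pᵏx) = pᵠ · Pₖ(x)` with `Pₖ` primitive, so `φ` is the `p`-adic content of
`P(r + pᵏx)` and depends only on `r mod pᵏ`. Evaluating at `x₀ = r + pᵏy` gives `pᵠ ∣ P(x₀)`.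
Conversely, while `φ < e`, the digit `y mod p` is a root of `Pₖ` mod `p`, so the vertex has a child
`r + pᵏy` with a strictly larger `φ`. Along the path towards `x₀` the value `φ` grows by the
thickness `t` at each step, so `φ - t < e ≤ φ` holds at one level only.
-/

open MvPolynomial

/-- `Trunk p P₀ r k φ t Pk` means `(r, k)` is a vertex of the trunk of `P₀`, with tree-top
value `φ` (the sum of the thicknesses along the path to the root), thickness `t` at this
vertex (`0` at the root by convention), and attached polynomial `Pk`. -/
inductive Trunk (p : ℕ) [Fact p.Prime] {n : ℕ} (P₀ : MvPolynomial (Fin n) ℤ_[p]) :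
    (Fin n → ℤ_[p]) → ℕ → ℕ → ℕ → MvPolynomial (Fin n) ℤ_[p] → Prop
  | root : Trunk p P₀ 0 0 0 0 P₀
  | step {r : Fin n → ℤ_[p]} {k φ t : ℕ} {Pk : MvPolynomial (Fin n) ℤ_[p]}
      (rk : Fin n → ℤ_[p]) (t' : ℕ) (Q : MvPolynomial (Fin n) ℤ_[p]) :
      Trunk p P₀ r k φ t Pk →
      (p : ℤ_[p]) ∣ eval rk Pk →
      pShift p 1 rk Pk = C ((p : ℤ_[p]) ^ t') * Q →
      ¬ C (p : ℤ_[p]) ∣ Q →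
      Trunk p P₀ (r + (p : ℤ_[p]) ^ k • rk) (k + 1) (φ + t') t' Q

theorem multiplicity_pow_mul_of_not_dvd {α : Type*} [CommMonoidWithZero α] [IsCancelMulZero α]
    {a b : α} (ha : a ≠ 0) (hb : ¬a ∣ b) (k : ℕ) : multiplicity a (a ^ k * b) = k :=
  multiplicity_eq_of_dvd_of_not_dvd (dvd_mul_right _ _)
    (by rwa [pow_succ, mul_dvd_mul_iff_left (pow_ne_zero k ha)])

theorem exists_eq_add_smul_of_forall_dvd_sub {ι R : Type*} [CommRing R] {a : R} {x r : ι → R}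
    (h : ∀ i, a ∣ x i - r i) : ∃ y, x = r + a • y := by
  choose y hy using h
  exact ⟨y, funext fun i => by simp [← hy]⟩

/-- Modulo `π`, the substitution `x ↦ r + π x` turns `P` into the constant `P(r)`. -/
theorem MvPolynomial.C_dvd_bind₁_of_dvd_eval {σ R : Type*} [CommRing R] {π : R} {r : σ → R}
    {P : MvPolynomial σ R} (h : π ∣ eval r P) :
    C π ∣ bind₁ (fun i => C (r i) + C π * X i) P := by
  set q := Ideal.Quotient.mk (Ideal.span {π})
  have hq : ∀ x, q x = 0 ↔ π ∣ x := Ideal.Quotient.eq_zero_iff_dvd π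
  have hsubst : (fun i => map q (C (r i) + C π * X i)) = C ∘ (q ∘ r) := by
    funext i
    simp [(hq π).2 dvd_rfl]
  rw [C_dvd_iff_map_hom_eq_zero q π hq, map_bind₁, hsubst, bind₁, aeval_C_comp_left, aeval_def,
    eval₂_map, Algebra.algebraMap_self, RingHom.id_comp, ← eval₂_comp, (hq _).2 h, map_zero]

variable {p : ℕ} [Fact p.Prime] {n : ℕ}

theorem pShift_pShift (k m : ℕ) (r d : Fin n → ℤ_[p]) (P : MvPolynomial (Fin n) ℤ_[p]) :
    pShift p m d (pShift p k r P) = pShift p (k + m) (r + (p : ℤ_[p]) ^ k • d) P := by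
  simp only [pShift, bind₁_bind₁, map_add, map_mul, bind₁_C_right, bind₁_X_right, Pi.add_apply,
    Pi.smul_apply, smul_eq_mul, pow_add]
  congr 2
  funext i
  ring

@[simp]
theorem pShift_zero_zero (P : MvPolynomial (Fin n) ℤ_[p]) :
    pShift p 0 (0 : Fin n → ℤ_[p]) P = P := by
  simp [pShift]

theorem pShift_C_mul (m : ℕ) (r : Fin n → ℤ_[p]) (a : ℤ_[p]) (P : MvPolynomial (Fin n) ℤ_[p]) :
    pShift p m r (C a * P) = C a * pShift p m r P := by
  simp [pShift]

theorem eval_pShift (k : ℕ) (r y : Fin n → ℤ_[p]) (P : MvPolynomial (Fin n) ℤ_[p]) :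
    eval y (pShift p k r P) = eval (r + (p : ℤ_[p]) ^ k • y) P := by
  change eval₂Hom (RingHom.id ℤ_[p]) y (bind₁ _ P) = eval₂Hom (RingHom.id ℤ_[p]) _ P
  rw [eval₂Hom_bind₁]
  congr 2
  funext i
  simp

/-- `P(r + pᵐx)` vanishes on all of `ℤ_pⁿ` only if `P` vanishes on the infinite box `r + pᵐℤ_pⁿ`. -/
theorem pShift_ne_zero (m : ℕ) (r : Fin n → ℤ_[p]) {P : MvPolynomial (Fin n) ℤ_[p]}
    (hP : P ≠ 0) : pShift p m r P ≠ 0 := by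
  intro h0
  apply hP
  have hinj : Function.Injective fun y : ℤ_[p] => (p : ℤ_[p]) ^ m * y :=
    mul_right_injective₀ (pow_ne_zero m PadicInt.prime_p.ne_zero)
  refine funext_set (fun i => Set.range fun y => r i + (p : ℤ_[p]) ^ m * y)
    (fun i => Set.infinite_range_of_injective ((add_right_injective (r i)).comp hinj)) ?_
  intro x hx
  choose y hy using fun i => hx i (Set.mem_univ i)
  have hxy : x = r + (p : ℤ_[p]) ^ m • y := funext fun i => by simp [← hy i]
  rw [hxy, ← eval_pShift, h0, map_zero, map_zero]

theorem not_C_dvd_pShift_zero (d : Fin n → ℤ_[p]) {F : MvPolynomial (Fin n) ℤ_[p]}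
    (hF : ¬C (p : ℤ_[p]) ∣ F) : ¬C (p : ℤ_[p]) ∣ pShift p 0 d F := by
  rintro ⟨M, hM⟩
  apply hF
  have hinv : pShift p 0 (-d) (pShift p 0 d F) = F := by simp [pShift_pShift]
  rw [← hinv, hM, pShift_C_mul]
  exact dvd_mul_right _ _

theorem C_dvd_pShift_one_of_dvd_eval {r : Fin n → ℤ_[p]} {P : MvPolynomial (Fin n) ℤ_[p]}
    (h : (p : ℤ_[p]) ∣ eval r P) : C (p : ℤ_[p]) ∣ pShift p 1 r P := by
  simpa only [pShift, pow_one] using C_dvd_bind₁_of_dvd_eval h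

theorem exists_eq_C_pow_mul_not_C_dvd {F : MvPolynomial (Fin n) ℤ_[p]} (hF : F ≠ 0) :
    ∃ (t : ℕ) (Q : MvPolynomial (Fin n) ℤ_[p]),
      F = C ((p : ℤ_[p]) ^ t) * Q ∧ ¬C (p : ℤ_[p]) ∣ Q := by
  obtain ⟨t, Q, hQ, hFQ⟩ :=
    WfDvdMonoid.max_power_factor' hF ((prime_C_iff (Fin n)).2 PadicInt.prime_p).not_isUnit
  exact ⟨t, Q, by rw [hFQ, map_pow], hQ⟩

namespace Trunk

variable {P₀ : MvPolynomial (Fin n) ℤ_[p]} {r r' : Fin n → ℤ_[p]} {k k' φ φ' t t' : ℕ}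
  {Pk Pk' : MvPolynomial (Fin n) ℤ_[p]}

theorem pShift_eq (h : Trunk p P₀ r k φ t Pk) :
    pShift p k r P₀ = C ((p : ℤ_[p]) ^ φ) * Pk := by
  induction h with
  | root => simp
  | step rk t' Q _ _ hshift _ ih =>
    rw [← pShift_pShift, ih, pShift_C_mul, hshift, ← mul_assoc, ← map_mul, ← pow_add]

theorem not_C_dvd (hprim : ¬C (p : ℤ_[p]) ∣ P₀) (h : Trunk p P₀ r k φ t Pk) :
    ¬C (p : ℤ_[p]) ∣ Pk := by
  cases h with
  | root => exact hprim
  | step _ _ _ _ _ _ hQ => exact hQ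

theorem eval_add_smul (h : Trunk p P₀ r k φ t Pk) (y : Fin n → ℤ_[p]) :
    eval (r + (p : ℤ_[p]) ^ k • y) P₀ = (p : ℤ_[p]) ^ φ * eval y Pk := by
  rw [← eval_pShift, h.pShift_eq, eval_mul, eval_C]

theorem pow_dvd_eval (h : Trunk p P₀ r k φ t Pk) {x : Fin n → ℤ_[p]}
    (hx : ∀ i, (p : ℤ_[p]) ^ k ∣ x i - r i) : (p : ℤ_[p]) ^ φ ∣ eval x P₀ := by
  obtain ⟨y, rfl⟩ := exists_eq_add_smul_of_forall_dvd_sub hx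
  rw [h.eval_add_smul]
  exact dvd_mul_right _ _

theorem phi_eq_multiplicity (hprim : ¬C (p : ℤ_[p]) ∣ P₀) (h : Trunk p P₀ r k φ t Pk) :
    φ = multiplicity (C (p : ℤ_[p])) (pShift p k r P₀) := by
  rw [h.pShift_eq, map_pow, multiplicity_pow_mul_of_not_dvd
    (C_ne_zero.2 PadicInt.prime_p.ne_zero) (h.not_C_dvd hprim)]

theorem phi_eq (hprim : ¬C (p : ℤ_[p]) ∣ P₀) (h : Trunk p P₀ r k φ t Pk)
    (h' : Trunk p P₀ r' k φ' t' Pk') (hr : ∀ i, (p : ℤ_[p]) ^ k ∣ r' i - r i) : φ = φ' := by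
  obtain ⟨d, rfl⟩ := exists_eq_add_smul_of_forall_dvd_sub hr
  have hshift : pShift p k (r + (p : ℤ_[p]) ^ k • d) P₀ =
      C ((p : ℤ_[p]) ^ φ) * pShift p 0 d Pk := by
    rw [← pShift_C_mul, ← h.pShift_eq, pShift_pShift, add_zero]
  rw [h'.phi_eq_multiplicity hprim, hshift, map_pow, multiplicity_pow_mul_of_not_dvd
    (C_ne_zero.2 PadicInt.prime_p.ne_zero) (not_C_dvd_pShift_zero d (h.not_C_dvd hprim))]

theorem exists_succ (hprim : ¬C (p : ℤ_[p]) ∣ P₀) (h : Trunk p P₀ r k φ t Pk)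
    {x : Fin n → ℤ_[p]} (hx : ∀ i, (p : ℤ_[p]) ^ k ∣ x i - r i)
    (hdvd : (p : ℤ_[p]) ^ (φ + 1) ∣ eval x P₀) :
    ∃ (r' : Fin n → ℤ_[p]) (φ' t' : ℕ) (Pk' : MvPolynomial (Fin n) ℤ_[p]),
      Trunk p P₀ r' (k + 1) φ' t' Pk' ∧ (∀ i, (p : ℤ_[p]) ^ (k + 1) ∣ x i - r' i) ∧ φ < φ' := by
  obtain ⟨y, rfl⟩ := exists_eq_add_smul_of_forall_dvd_sub hx
  have hy : (p : ℤ_[p]) ∣ eval y Pk := by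
    rw [h.eval_add_smul, pow_succ] at hdvd
    exact (mul_dvd_mul_iff_left (pow_ne_zero φ PadicInt.prime_p.ne_zero)).1 hdvd
  have hPk : Pk ≠ 0 := by
    rintro rfl
    exact h.not_C_dvd hprim (dvd_zero _)
  obtain ⟨t', Q, hQ, hQprim⟩ := exists_eq_C_pow_mul_not_C_dvd (pShift_ne_zero 1 y hPk)
  have ht' : t' ≠ 0 := by
    rintro rfl
    have := C_dvd_pShift_one_of_dvd_eval hy
    rw [hQ, pow_zero, map_one, one_mul] at this
    exact hQprim this
  exact ⟨_, _, _, _, h.step y t' Q hy hQ hQprim, by simp, by omega⟩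

theorem exists_ancestor (h' : Trunk p P₀ r' k' φ' t' Pk') (hk : k < k') :
    ∃ (r : Fin n → ℤ_[p]) (φ t : ℕ) (Pk : MvPolynomial (Fin n) ℤ_[p]),
      Trunk p P₀ r k φ t Pk ∧ (∀ i, (p : ℤ_[p]) ^ k ∣ r' i - r i) ∧ φ + t' ≤ φ' := by
  induction h' with
  | root => omega
  | @step r₀ k₀ φ₀ t₀ Pk₀ rk s Q h₀ _ _ _ ih =>
    have hr₀ : ∀ i, (p : ℤ_[p]) ^ k₀ ∣ (r₀ + (p : ℤ_[p]) ^ k₀ • rk) i - r₀ i := fun i => by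
      simp
    rcases (Nat.lt_succ_iff.1 hk).lt_or_eq with hk | rfl
    · obtain ⟨r, φ, t, Pk, h, hr, hφ⟩ := ih hk
      refine ⟨r, φ, t, Pk, h, fun i => ?_, by omega⟩
      rw [← sub_add_sub_cancel _ (r₀ i)]
      exact dvd_add (dvd_trans (pow_dvd_pow _ hk.le) (hr₀ i)) (hr i)
    · exact ⟨r₀, φ₀, t₀, Pk₀, h₀, hr₀, le_rfl⟩

theorem level_le_of_sub_lt (hprim : ¬C (p : ℤ_[p]) ∣ P₀) (h : Trunk p P₀ r k φ t Pk)
    (h' : Trunk p P₀ r' k' φ' t' Pk') {x : Fin n → ℤ_[p]}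
    (hx : ∀ i, (p : ℤ_[p]) ^ k ∣ x i - r i) (hx' : ∀ i, (p : ℤ_[p]) ^ k' ∣ x i - r' i)
    (hφ : φ' - t' < φ) : k' ≤ k := by
  by_contra! hk
  obtain ⟨r₁, φ₁, t₁, Pk₁, h₁, hr₁, hφ₁⟩ := h'.exists_ancestor hk
  have hr : ∀ i, (p : ℤ_[p]) ^ k ∣ r₁ i - r i := fun i => by
    have hx₁ : (p : ℤ_[p]) ^ k ∣ x i - r₁ i := by
      rw [← sub_add_sub_cancel _ (r' i)]
      exact dvd_add (dvd_trans (pow_dvd_pow _ hk.le) (hx' i)) (hr₁ i)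
    rw [← sub_sub_sub_cancel_left _ _ (x i)]
    exact dvd_sub (hx i) hx₁
  have := h.phi_eq hprim h₁ hr
  omega

end Trunk

theorem exists_trunk_of_pow_dvd_eval {P₀ : MvPolynomial (Fin n) ℤ_[p]}
    (hprim : ¬C (p : ℤ_[p]) ∣ P₀) {x : Fin n → ℤ_[p]} :
    ∀ e : ℕ, (p : ℤ_[p]) ^ e ∣ eval x P₀ →
      ∃ (r : Fin n → ℤ_[p]) (k φ t : ℕ) (Pk : MvPolynomial (Fin n) ℤ_[p]),
        Trunk p P₀ r k φ t Pk ∧ (∀ i, (p : ℤ_[p]) ^ k ∣ x i - r i) ∧ e ≤ φ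
  | 0, _ => ⟨0, 0, 0, 0, P₀, .root, by simp, le_rfl⟩
  | e + 1, hdvd => by
    obtain ⟨r, k, φ, t, Pk, h, hx, he⟩ :=
      exists_trunk_of_pow_dvd_eval hprim e (dvd_trans (pow_dvd_pow _ e.le_succ) hdvd)
    rcases he.lt_or_eq with he | rfl
    · exact ⟨r, k, φ, t, Pk, h, hx, he⟩
    · obtain ⟨r', φ', t', Pk', h', hx', hφ⟩ := h.exists_succ hprim hx hdvd
      exact ⟨r', k + 1, φ', t', Pk', h', hx', hφ⟩

theorem trunk_to_tree_general (p : ℕ) [Fact p.Prime] {n : ℕ}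
    (P : MvPolynomial (Fin n) ℤ_[p]) (hprim : ¬ C (p : ℤ_[p]) ∣ P)
    (e : ℕ) (x₀ : Fin n → ℤ_[p]) :
    ((p : ℤ_[p]) ^ e ∣ eval x₀ P ↔
      ∃ (r : Fin n → ℤ_[p]) (k φ t : ℕ) (Pk : MvPolynomial (Fin n) ℤ_[p]),
        Trunk p P r k φ t Pk ∧ (∀ i, (p : ℤ_[p]) ^ k ∣ x₀ i - r i) ∧ e ≤ φ) ∧
    (∀ (r : Fin n → ℤ_[p]) (k φ t : ℕ) (Pk : MvPolynomial (Fin n) ℤ_[p])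
        (r' : Fin n → ℤ_[p]) (k' φ' t' : ℕ) (Pk' : MvPolynomial (Fin n) ℤ_[p]),
      Trunk p P r k φ t Pk → Trunk p P r' k' φ' t' Pk' →
      (∀ i, (p : ℤ_[p]) ^ k ∣ x₀ i - r i) → (∀ i, (p : ℤ_[p]) ^ k' ∣ x₀ i - r' i) →
      φ - t < e → e ≤ φ → φ' - t' < e → e ≤ φ' →
      k = k' ∧ ∀ i, (p : ℤ_[p]) ^ k ∣ r i - r' i) := by
  refine ⟨⟨exists_trunk_of_pow_dvd_eval hprim e, ?_⟩, ?_⟩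
  · rintro ⟨r, k, φ, t, Pk, h, hx, he⟩
    exact dvd_trans (pow_dvd_pow _ he) (h.pow_dvd_eval hx)
  · intro r k φ t Pk r' k' φ' t' Pk' h h' hx hx' hφ he hφ' he'
    obtain rfl : k = k' :=
      le_antisymm (h'.level_le_of_sub_lt hprim h hx' hx (by omega))
        (h.level_le_of_sub_lt hprim h' hx hx' (by omega))
    refine ⟨rfl, fun i => ?_⟩
    rw [← sub_sub_sub_cancel_left _ _ (x₀ i)]
    exact dvd_sub (hx' i) (hx i)

/-- `x₀ ∈ ℤ_pⁿ` satisfies `P(x₀) ≡ 0 (mod pᵉ)` iff there is a trunk vertex `(r,k)` with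
`x₀ ≡ r (mod pᵏ)` and `φ(r,k) ≥ e`; moreover such a vertex is unique under the extra
condition `φ(r,k) - t_k < e ≤ φ(r,k)`. -/
theorem trunk_to_tree (p : ℕ) [Fact p.Prime] {n : ℕ}
    (P : MvPolynomial (Fin n) ℤ_[p]) (hprim : ¬ C (p : ℤ_[p]) ∣ P)
    (e : ℕ) (he : 1 ≤ e) (x₀ : Fin n → ℤ_[p]) :
    ((p : ℤ_[p]) ^ e ∣ eval x₀ P ↔
      ∃ (r : Fin n → ℤ_[p]) (k φ t : ℕ) (Pk : MvPolynomial (Fin n) ℤ_[p]),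
        Trunk p P r k φ t Pk ∧ (∀ i, (p : ℤ_[p]) ^ k ∣ x₀ i - r i) ∧ e ≤ φ) ∧
    (∀ (r : Fin n → ℤ_[p]) (k φ t : ℕ) (Pk : MvPolynomial (Fin n) ℤ_[p])
        (r' : Fin n → ℤ_[p]) (k' φ' t' : ℕ) (Pk' : MvPolynomial (Fin n) ℤ_[p]),
      Trunk p P r k φ t Pk → Trunk p P r' k' φ' t' Pk' →
      (∀ i, (p : ℤ_[p]) ^ k ∣ x₀ i - r i) → (∀ i, (p : ℤ_[p]) ^ k' ∣ x₀ i - r' i) →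
      φ - t < e → e ≤ φ → φ' - t' < e → e ≤ φ' →
      k = k' ∧ ∀ i, (p : ℤ_[p]) ^ k ∣ r i - r' i) :=
  trunk_to_tree_general p P hprim e x₀
end

section
/- Let p be prime and P(x,y) = F(x) + G(y) ∈ ℤ_p[x,y] with p not dividing P. If P has an infinite stalk at the root (0,0) all of whose vertices have thickness at least u (i.e. p^{ku} divides the k-th iterate P(p^k x, p^k y) for all k), then, up to exchanging x and y, P(x,y) = x^u U(x) + p^α y^v V(y) with α ≥ 0, v ≥ u, and U, V ∈ ℤ_p[x]. -/
open MvPolynomial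

lemma pzero (p : ℕ) [Fact p.Prime] (x : ℤ_[p]) (h : ∀ k : ℕ, (p:ℤ_[p])^k ∣ x) : x = 0 := by
  by_contra hx
  have hnorm : ∀ k : ℕ, ‖x‖ ≤ (p:ℝ) ^ (-(k:ℤ)) := by
    intro k
    rw [PadicInt.norm_le_pow_iff_mem_span_pow, Ideal.mem_span_singleton]
    exact h k
  have hp1 : (1:ℝ) < p := by exact_mod_cast (Fact.out : p.Prime).one_lt
  have hpos : 0 < ‖x‖ := norm_pos_iff.mpr hx
  obtain ⟨k, hk⟩ := exists_pow_lt_of_lt_one hpos (by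
    rw [inv_lt_one_iff₀]; right; exact hp1 : (p:ℝ)⁻¹ < 1)
  have := hnorm k
  rw [zpow_neg, zpow_natCast, ← inv_pow] at this
  linarith

lemma coeff_comp_CX {R : Type*} [CommRing R] (F : Polynomial R) (a : R) (n : ℕ) :
    (F.comp (Polynomial.C a * Polynomial.X)).coeff n = a ^ n * F.coeff n := by
  rw [Polynomial.comp_eq_sum_left]
  rw [Polynomial.sum_def, Polynomial.finset_sum_coeff]
  simp only [mul_pow, ← Polynomial.C_pow, ← mul_assoc, ← Polynomial.C_mul,
    Polynomial.coeff_C_mul, Polynomial.coeff_X_pow]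
  rw [Finset.sum_eq_single n (fun b _ hb => by simp [hb.symm]) (fun hn => by simp [Polynomial.notMem_support_iff.mp hn])]
  simp [mul_comm]

lemma key (p : ℕ) [Fact p.Prime] (u : ℕ) (hu : 1 ≤ u) (F : Polynomial ℤ_[p]) (c : ℤ_[p])
    (h : ∀ k : ℕ, Polynomial.C ((p:ℤ_[p])^(k*u)) ∣
      F.comp (Polynomial.C ((p:ℤ_[p])^k) * Polynomial.X) + Polynomial.C c) :
    F.coeff 0 + c = 0 ∧ ∀ n, 0 < n → n < u → F.coeff n = 0 := by
  have hp0 : (p:ℤ_[p]) ≠ 0 := by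
    exact_mod_cast Nat.cast_ne_zero.mpr (Fact.out : p.Prime).ne_zero
  have hco : ∀ k n : ℕ, (p:ℤ_[p])^(k*u) ∣ (p:ℤ_[p])^(k*n) * F.coeff n
      + (Polynomial.C c).coeff n := by
    intro k n
    have := (Polynomial.C_dvd_iff_dvd_coeff _ _).mp (h k) n
    rwa [Polynomial.coeff_add, coeff_comp_CX, ← pow_mul] at this
  constructor
  · apply pzero p
    intro k
    have := hco k 0
    simp only [Nat.mul_zero, pow_zero, one_mul, Polynomial.coeff_C_zero] at this
    exact dvd_trans (pow_dvd_pow _ (Nat.le_mul_of_pos_right k hu)) this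
  · intro n hn hnu
    apply pzero p
    intro k
    have h2 := hco k n
    rw [Polynomial.coeff_C, if_neg hn.ne', add_zero] at h2
    have hsplit : (p:ℤ_[p])^(k*u) = (p:ℤ_[p])^(k*n) * (p:ℤ_[p])^(k*(u-n)) := by
      rw [← pow_add, ← Nat.mul_add, Nat.add_sub_cancel' hnu.le]
    rw [hsplit] at h2
    have h3 : (p:ℤ_[p])^(k*(u-n)) ∣ F.coeff n :=
      (mul_dvd_mul_iff_left (pow_ne_zero _ hp0)).mp h2
    exact dvd_trans (pow_dvd_pow _ (Nat.le_mul_of_pos_right k (Nat.sub_pos_of_lt hnu))) h3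

lemma transfer (p : ℕ) [Fact p.Prime] (u : ℕ) (F G : Polynomial ℤ_[p])
    (P : MvPolynomial (Fin 2) ℤ_[p])
    (hP : P = Polynomial.aeval (X 0 : MvPolynomial (Fin 2) ℤ_[p]) F +
        Polynomial.aeval (X 1 : MvPolynomial (Fin 2) ℤ_[p]) G)
    (hstalk : ∀ k : ℕ, C ((p : ℤ_[p]) ^ (k * u)) ∣
        bind₁ (fun i => C ((p : ℤ_[p]) ^ k) * X i) P) :
    ∀ k : ℕ, Polynomial.C ((p:ℤ_[p])^(k*u)) ∣
      F.comp (Polynomial.C ((p:ℤ_[p])^k) * Polynomial.X) + Polynomial.C (G.eval 0) := by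
  intro k
  set e : MvPolynomial (Fin 2) ℤ_[p] →ₐ[ℤ_[p]] Polynomial ℤ_[p] :=
    aeval (fun j : Fin 2 => if j = 0 then (Polynomial.X : Polynomial ℤ_[p]) else 0) with he
  obtain ⟨Q, hQ⟩ := hstalk k
  refine ⟨e Q, ?_⟩
  have h1 : e ((bind₁ fun i => C ((p:ℤ_[p]) ^ k) * X i) P)
      = F.comp (Polynomial.C ((p:ℤ_[p])^k) * Polynomial.X) + Polynomial.C (G.eval 0) := by
    rw [hP, map_add, map_add]
    simp only [← Polynomial.aeval_algHom_apply, map_mul, bind₁_X_right, bind₁_C_right,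
      algHom_C, aeval_X, he, if_pos rfl, if_neg (by decide : ¬ (1 : Fin 2) = 0),
      mul_zero, ← Polynomial.comp_eq_aeval, Polynomial.comp_zero]
    simp [aeval_C, Polynomial.algebraMap_eq]
  rw [← h1, hQ, map_mul]
  simp [he, aeval_C, Polynomial.algebraMap_eq]

lemma transfer' (p : ℕ) [Fact p.Prime] (u : ℕ) (F G : Polynomial ℤ_[p])
    (P : MvPolynomial (Fin 2) ℤ_[p])
    (hP : P = Polynomial.aeval (X 0 : MvPolynomial (Fin 2) ℤ_[p]) F +
        Polynomial.aeval (X 1 : MvPolynomial (Fin 2) ℤ_[p]) G)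
    (hstalk : ∀ k : ℕ, C ((p : ℤ_[p]) ^ (k * u)) ∣
        bind₁ (fun i => C ((p : ℤ_[p]) ^ k) * X i) P) :
    ∀ k : ℕ, Polynomial.C ((p:ℤ_[p])^(k*u)) ∣
      G.comp (Polynomial.C ((p:ℤ_[p])^k) * Polynomial.X) + Polynomial.C (F.eval 0) := by
  intro k
  set e : MvPolynomial (Fin 2) ℤ_[p] →ₐ[ℤ_[p]] Polynomial ℤ_[p] :=
    aeval (fun j : Fin 2 => if j = 1 then (Polynomial.X : Polynomial ℤ_[p]) else 0) with he
  obtain ⟨Q, hQ⟩ := hstalk k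
  refine ⟨e Q, ?_⟩
  have h1 : e ((bind₁ fun i => C ((p:ℤ_[p]) ^ k) * X i) P)
      = G.comp (Polynomial.C ((p:ℤ_[p])^k) * Polynomial.X) + Polynomial.C (F.eval 0) := by
    rw [hP, map_add, map_add]
    simp only [← Polynomial.aeval_algHom_apply, map_mul, bind₁_X_right, bind₁_C_right,
      algHom_C, aeval_X, he, if_pos rfl, if_neg (by decide : ¬ (0 : Fin 2) = 1),
      mul_zero, ← Polynomial.comp_eq_aeval, Polynomial.comp_zero]
    rw [add_comm]
    simp [aeval_C, Polynomial.algebraMap_eq]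
  rw [← h1, hQ, map_mul]
  simp [he, aeval_C, Polynomial.algebraMap_eq]

/-- Normalization lemma: if `P(x,y) = F(x) + G(y)` over `ℤ_p` is not divisible by `p` and
has an infinite stalk at the root `(0,0)` all of whose vertices have thickness at least `u`
(i.e. `p^{ku} ∣ P(pᵏx, pᵏy)` for all `k`), then, up to exchanging `x` and `y`,
`P(x,y) = x^u U(x) + p^α y^v V(y)` with `α ≥ 0` and `v ≥ u`. -/
theorem separated_normalization (p : ℕ) [Fact p.Prime] (u : ℕ) (hu : 1 ≤ u)
    (F G : Polynomial ℤ_[p]) (P : MvPolynomial (Fin 2) ℤ_[p])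
    (hP : P = Polynomial.aeval (X 0 : MvPolynomial (Fin 2) ℤ_[p]) F +
        Polynomial.aeval (X 1 : MvPolynomial (Fin 2) ℤ_[p]) G)
    (hprim : ¬ C (p : ℤ_[p]) ∣ P)
    (hstalk : ∀ k : ℕ, C ((p : ℤ_[p]) ^ (k * u)) ∣
        bind₁ (fun i => C ((p : ℤ_[p]) ^ k) * X i) P) :
    ∃ (α v : ℕ) (U V : Polynomial ℤ_[p]), u ≤ v ∧
      (P = (X 0) ^ u * Polynomial.aeval (X 0 : MvPolynomial (Fin 2) ℤ_[p]) U +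
          C ((p : ℤ_[p]) ^ α) * (X 1) ^ v *
            Polynomial.aeval (X 1 : MvPolynomial (Fin 2) ℤ_[p]) V ∨
       P = (X 1) ^ u * Polynomial.aeval (X 1 : MvPolynomial (Fin 2) ℤ_[p]) U +
          C ((p : ℤ_[p]) ^ α) * (X 0) ^ v *
            Polynomial.aeval (X 0 : MvPolynomial (Fin 2) ℤ_[p]) V) := by
  obtain ⟨hF0, hFn⟩ := key p u hu F (G.eval 0) (transfer p u F G P hP hstalk)
  obtain ⟨hG0, hGn⟩ := key p u hu G (F.eval 0) (transfer' p u F G P hP hstalk)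
  -- extract U, V
  have hXF : (Polynomial.X : Polynomial ℤ_[p]) ^ u ∣ F - Polynomial.C (F.coeff 0) := by
    rw [Polynomial.X_pow_dvd_iff]
    intro d hd
    rcases Nat.eq_zero_or_pos d with rfl | hdpos
    · simp
    · simp [Polynomial.coeff_C, hdpos.ne', hFn d hdpos hd]
  have hXG : (Polynomial.X : Polynomial ℤ_[p]) ^ u ∣ G - Polynomial.C (G.coeff 0) := by
    rw [Polynomial.X_pow_dvd_iff]
    intro d hd
    rcases Nat.eq_zero_or_pos d with rfl | hdpos
    · simp
    · simp [Polynomial.coeff_C, hdpos.ne', hGn d hdpos hd]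
  obtain ⟨U, hU⟩ := hXF
  obtain ⟨V, hV⟩ := hXG
  refine ⟨0, u, U, V, le_refl u, Or.inl ?_⟩
  have hFeq : F = Polynomial.C (F.coeff 0) + Polynomial.X ^ u * U := by
    rw [← hU]; ring
  have hGeq : G = Polynomial.C (G.coeff 0) + Polynomial.X ^ u * V := by
    rw [← hV]; ring
  have hC0 : (C (F.coeff 0) : MvPolynomial (Fin 2) ℤ_[p]) + C (G.coeff 0) = 0 := by
    rw [Polynomial.coeff_zero_eq_eval_zero] at hF0
    rw [← C_add, Polynomial.coeff_zero_eq_eval_zero, Polynomial.coeff_zero_eq_eval_zero,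
      hF0, C_0]
  rw [hP, hFeq, hGeq]
  simp only [map_add, map_mul, map_pow, Polynomial.aeval_C, Polynomial.aeval_X,
    MvPolynomial.algebraMap_eq, pow_zero, C_1, one_mul]
  linear_combination hC0
end
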